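/- arXiv:2002.09233 — 3 statements merged into one kernel-verified Lean document; each statement's English description precedes it below -/
import Mathlib

section
/- Let $A$ be a $d\times d$ matrix with nonnegative real entries, viewed over the max-times semiring $([0,\infty),\vee,\cdot)$. There exists a vector $x$ with all entries strictly positive such that $A\odot x \le x$ (entrywise) if and only if the maximum cycle mean $\lambda(A)$ of $A$ satisfies $\lambda(A)\le 1$. -/
open scoped NNReal

noncomputable section

/-- Max-times matrix-vector product: `(A ⊙ x) i = max_j (A i j * x j)`. -/
def maxMul {d : ℕ} (A : Matrix (Fin d) (Fin d) ℝ≥0) (x : Fin d → ℝ≥0) : Fin d → ℝ≥0 :=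
  fun i => Finset.univ.sup fun j => A i j * x j

/-- Weight of the directed cycle `c 0 → c 1 → ⋯ → c r → c 0`
(the edge `j → i` contributes the entry `A i j`). -/
def cycleWeight {d : ℕ} (A : Matrix (Fin d) (Fin d) ℝ≥0) {r : ℕ}
    (c : Fin (r + 1) → Fin d) : ℝ≥0 :=
  ∏ t, A (c (t + 1)) (c t)

/-- Maximum cycle mean: the supremum of the geometric means of the weights of
(simple) directed cycles of the digraph of `A`; it is `0` when this digraph is acyclic. -/
noncomputable def maxCycleMean {d : ℕ} (A : Matrix (Fin d) (Fin d) ℝ≥0) : ℝ≥0 :=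
  sSup {m | ∃ (r : ℕ) (c : Fin (r + 1) → Fin d),
    Function.Injective c ∧ m = cycleWeight A c ^ (((r : ℝ) + 1)⁻¹)}

/-!
If `x > 0` and `A ⊙ x ≤ x`, then `a_{c(t+1) c(t)} x_{c(t)} ≤ x_{c(t+1)}` along any cycle `c`;
multiplying these inequalities around the cycle and cancelling `∏ₜ x_{c(t)}` shows that the
cycle has weight at most `1`.

Conversely, if every simple cycle has weight at most `1`, then so does every closed walk, since it
splits into simple cycles. Cutting closed subwalks out of a walk until it is a path then bounds all
walk weights, so `x_i := sup` of the weights of the walks ending at `i` is finite. It is at least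
`1` (the empty walk), and `a_ij x_j ≤ x_i` because a walk ending at `j` extends by the edge `j → i`.
-/

open Finset Function

section Walks

variable {ι : Type*} (A : Matrix ι ι ℝ≥0)

def walkWeight (w : ℕ → ι) (m : ℕ) : ℝ≥0 :=
  ∏ k ∈ range m, A (w (k + 1)) (w k)

variable {A}

lemma walkWeight_zero (w : ℕ → ι) : walkWeight A w 0 = 1 := prod_range_zero _

lemma walkWeight_succ (w : ℕ → ι) (m : ℕ) :
    walkWeight A w (m + 1) = walkWeight A w m * A (w (m + 1)) (w m) :=
  prod_range_succ _ _

lemma walkWeight_add (w : ℕ → ι) (a b : ℕ) :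
    walkWeight A w (a + b) = walkWeight A w a * walkWeight A (fun k => w (a + k)) b := by
  simp only [walkWeight, prod_range_add, Nat.add_assoc]

lemma walkWeight_congr {w w' : ℕ → ι} {m : ℕ} (h : ∀ k ≤ m, w k = w' k) :
    walkWeight A w m = walkWeight A w' m :=
  prod_congr rfl fun k hk => by
    rw [mem_range] at hk
    rw [h k hk.le, h (k + 1) hk]

lemma walkWeight_le_pow {B : ℝ≥0} (hB : ∀ i j, A i j ≤ B) (w : ℕ → ι) (m : ℕ) :
    walkWeight A w m ≤ B ^ m := by
  simpa only [walkWeight, card_range] using prod_le_pow_card (range m) _ B fun k _ => hB _ _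

def excise (w : ℕ → ι) (p s : ℕ) : ℕ → ι :=
  fun k => if k ≤ p then w k else w (k + s)

lemma excise_zero (w : ℕ → ι) (p s : ℕ) : excise w p s 0 = w 0 := if_pos p.zero_le

lemma excise_add {w : ℕ → ι} {p s : ℕ} (hw : w p = w (p + s)) (t : ℕ) :
    excise w p s (p + t) = w (p + s + t) := by
  rcases t.eq_zero_or_pos with rfl | ht
  · simpa [excise] using hw
  · rw [excise, if_neg (by omega)]
    congr 1
    omega

lemma walkWeight_excise {w : ℕ → ι} {p s : ℕ} (hw : w p = w (p + s)) (t : ℕ) :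
    walkWeight A w (p + s + t) =
      walkWeight A (excise w p s) (p + t) * walkWeight A (fun k => w (p + k)) s := by
  have hprefix : walkWeight A (excise w p s) p = walkWeight A w p :=
    walkWeight_congr fun k hk => if_pos hk
  rw [walkWeight_add, walkWeight_add, walkWeight_add _ p t, hprefix]
  simp only [excise_add hw]
  ring

lemma exists_loop_of_not_injOn {w : ℕ → ι} {n : ℕ} (h : ¬ Set.InjOn w (Set.Iio n)) :
    ∃ p s, 0 < s ∧ p + s < n ∧ w p = w (p + s) := by
  simp only [Set.InjOn, Set.mem_Iio, not_forall] at h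
  obtain ⟨a, ha, b, hb, hab, hne⟩ := h
  rcases lt_or_gt_of_ne hne with hlt | hlt
  · exact ⟨a, b - a, by omega, by omega, by rwa [Nat.add_sub_cancel' hlt.le]⟩
  · exact ⟨b, a - b, by omega, by omega, by rw [Nat.add_sub_cancel' hlt.le, hab]⟩

/-- Removing closed subwalks of weight `≤ 1` brings every walk down to a path. -/
lemma walkWeight_le_pow_card [Fintype ι] {B : ℝ≥0} (hB : ∀ i j, A i j ≤ B) (hB1 : 1 ≤ B)
    (hclosed : ∀ m (w : ℕ → ι), w m = w 0 → walkWeight A w m ≤ 1) (m : ℕ) (w : ℕ → ι) :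
    walkWeight A w m ≤ B ^ Fintype.card ι := by
  induction m using Nat.strong_induction_on generalizing w with
  | _ m ih =>
  by_cases hm : m < Fintype.card ι
  · exact (walkWeight_le_pow hB w m).trans (pow_le_pow_right₀ hB1 hm.le)
  have hrep : ¬ Set.InjOn w (Set.Iio (m + 1)) := fun hinj => by
    have := card_le_card_of_injOn w (t := univ) (fun _ _ => mem_coe.2 (mem_univ _))
      (by rwa [coe_range])
    simp only [card_range, card_univ] at this
    omega
  obtain ⟨p, s, hs, hps, hw⟩ := exists_loop_of_not_injOn hrep
  obtain ⟨t, rfl⟩ : ∃ t, m = p + s + t := ⟨m - (p + s), by omega⟩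
  calc walkWeight A w (p + s + t)
      = walkWeight A (excise w p s) (p + t) * walkWeight A (fun k => w (p + k)) s :=
        walkWeight_excise hw t
    _ ≤ B ^ Fintype.card ι * 1 := mul_le_mul' (ih _ (by omega) _) (hclosed _ _ hw.symm)
    _ = B ^ Fintype.card ι := mul_one _

end Walks

section Potential

variable {ι : Type*} {A : Matrix ι ι ℝ≥0}

variable (A) in
def walkWeightsTo (i : ι) : Set ℝ≥0 :=
  {v | ∃ m, ∃ w : ℕ → ι, w m = i ∧ v = walkWeight A w m}

lemma one_mem_walkWeightsTo (i : ι) : 1 ∈ walkWeightsTo A i :=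
  ⟨0, fun _ => i, rfl, (walkWeight_zero _).symm⟩

lemma mul_mem_walkWeightsTo {i j : ι} {v : ℝ≥0} (hv : v ∈ walkWeightsTo A j) :
    A i j * v ∈ walkWeightsTo A i := by
  obtain ⟨m, w, rfl, rfl⟩ := hv
  refine ⟨m + 1, fun k => if k ≤ m then w k else i, by simp, ?_⟩
  rw [walkWeight_succ, walkWeight_congr fun k hk => if_pos hk, if_neg (by omega), if_pos le_rfl,
    mul_comm]

lemma bddAbove_walkWeightsTo [Fintype ι]
    (hclosed : ∀ m (w : ℕ → ι), w m = w 0 → walkWeight A w m ≤ 1) (i : ι) :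
    BddAbove (walkWeightsTo A i) := by
  set B := univ.sup (fun p : ι × ι => A p.1 p.2) ⊔ 1
  have hB : ∀ i j, A i j ≤ B := fun i j =>
    le_sup_of_le_left (le_sup (f := fun p : ι × ι => A p.1 p.2) (mem_univ (i, j)))
  refine ⟨B ^ Fintype.card ι, ?_⟩
  rintro _ ⟨m, w, -, rfl⟩
  exact walkWeight_le_pow_card hB le_sup_right hclosed m w

lemma mul_sSup_walkWeightsTo_le [Fintype ι]
    (hclosed : ∀ m (w : ℕ → ι), w m = w 0 → walkWeight A w m ≤ 1) (i j : ι) :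
    A i j * sSup (walkWeightsTo A j) ≤ sSup (walkWeightsTo A i) := by
  rw [sSup_eq_iSup']
  exact NNReal.mul_iSup_le fun v =>
    le_csSup (bddAbove_walkWeightsTo hclosed i) (mul_mem_walkWeightsTo v.2)

end Potential

section Cycles

variable {d : ℕ} {A : Matrix (Fin d) (Fin d) ℝ≥0}

lemma cycleWeight_eq_walkWeight {r : ℕ} {w : ℕ → Fin d} (hw : w (r + 1) = w 0) :
    cycleWeight A (fun t : Fin (r + 1) => w t) = walkWeight A w (r + 1) := by
  rw [walkWeight, ← Fin.prod_univ_eq_prod_range]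
  refine prod_congr rfl fun t _ => ?_
  dsimp only
  rw [Fin.val_add_one]
  split_ifs with ht
  · simp [ht, hw]
  · rfl

/-- Every closed walk splits into simple cycles. -/
lemma walkWeight_le_one_of_cycleWeight_le_one
    (hcyc : ∀ r (c : Fin (r + 1) → Fin d), Injective c → cycleWeight A c ≤ 1) :
    ∀ m (w : ℕ → Fin d), w m = w 0 → walkWeight A w m ≤ 1 := by
  intro m
  induction m using Nat.strong_induction_on with
  | _ m ih =>
  intro w hclosed
  rcases m with _ | r
  · exact (walkWeight_zero w).le
  by_cases hinj : Set.InjOn w (Set.Iio (r + 1))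
  · rw [← cycleWeight_eq_walkWeight hclosed]
    exact hcyc r _ fun a b hab => Fin.ext (hinj a.isLt b.isLt hab)
  obtain ⟨p, s, hs, hps, hw⟩ := exists_loop_of_not_injOn hinj
  obtain ⟨t, ht⟩ : ∃ t, r + 1 = p + s + t := ⟨r + 1 - (p + s), by omega⟩
  have hloop := ih s (by omega) (fun k => w (p + k)) hw.symm
  have hrest := ih (p + t) (by omega) (excise w p s) <| by
    rw [excise_add hw, excise_zero, ← ht, hclosed]
  calc walkWeight A w (r + 1)
      = walkWeight A (excise w p s) (p + t) * walkWeight A (fun k => w (p + k)) s := by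
        rw [ht, walkWeight_excise hw]
    _ ≤ 1 * 1 := mul_le_mul' hrest hloop
    _ = 1 := one_mul 1

lemma cycleWeight_le_one_of_maxMul_le {x : Fin d → ℝ≥0} (hx : ∀ i, 0 < x i)
    (hAx : ∀ i, maxMul A x i ≤ x i) {r : ℕ} (c : Fin (r + 1) → Fin d) :
    cycleWeight A c ≤ 1 := by
  have hstep : ∀ t, A (c (t + 1)) (c t) * x (c t) ≤ x (c (t + 1)) := fun t =>
    (le_sup (f := fun j => A (c (t + 1)) j * x j) (mem_univ (c t))).trans (hAx _)
  have hprod : cycleWeight A c * ∏ t, x (c t) ≤ 1 * ∏ t, x (c t) := by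
    calc cycleWeight A c * ∏ t, x (c t) = ∏ t, A (c (t + 1)) (c t) * x (c t) :=
          (prod_mul_distrib).symm
      _ ≤ ∏ t, x (c (t + 1)) := prod_le_prod' fun t _ => hstep t
      _ = 1 * ∏ t, x (c t) := by
          rw [one_mul]
          exact Equiv.prod_comp (Equiv.addRight 1) fun t => x (c t)
  exact le_of_mul_le_mul_right hprod (prod_pos fun t _ => hx (c t))

lemma cycleMean_le_one_iff {r : ℕ} (c : Fin (r + 1) → Fin d) :
    cycleWeight A c ^ ((r : ℝ) + 1)⁻¹ ≤ 1 ↔ cycleWeight A c ≤ 1 := by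
  rw [NNReal.rpow_inv_le_iff (by positivity), NNReal.one_rpow]

lemma finite_cycleMeans :
    {m | ∃ (r : ℕ) (c : Fin (r + 1) → Fin d),
      Injective c ∧ m = cycleWeight A c ^ (((r : ℝ) + 1)⁻¹)}.Finite := by
  refine (Set.finite_range fun rc : Σ r : Fin d, Fin (r + 1) → Fin d =>
    cycleWeight A rc.2 ^ (((rc.1 : ℕ) : ℝ) + 1)⁻¹).subset ?_
  rintro _ ⟨r, c, hc, rfl⟩
  have hr : r < d := by simpa using Fintype.card_le_of_injective c hc
  exact ⟨⟨⟨r, hr⟩, c⟩, rfl⟩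

lemma maxCycleMean_le_one_iff :
    maxCycleMean A ≤ 1 ↔ ∀ r (c : Fin (r + 1) → Fin d), Injective c → cycleWeight A c ≤ 1 := by
  refine ⟨fun h r c hc => ?_, fun h => csSup_le' ?_⟩
  · exact (cycleMean_le_one_iff c).1 <|
      (le_csSup finite_cycleMeans.bddAbove ⟨r, c, hc, rfl⟩).trans h
  · rintro _ ⟨r, c, hc, rfl⟩
    exact (cycleMean_le_one_iff c).2 (h r c hc)

end Cycles

/-- There is a strictly positive vector `x` with `A ⊙ x ≤ x` (entrywise) iff the
maximum cycle mean of `A` is at most `1`. -/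
theorem stmt0 {d : ℕ} (A : Matrix (Fin d) (Fin d) ℝ≥0) :
    (∃ x : Fin d → ℝ≥0, (∀ i, 0 < x i) ∧ ∀ i, maxMul A x i ≤ x i) ↔ maxCycleMean A ≤ 1 := by
  rw [maxCycleMean_le_one_iff]
  refine ⟨fun ⟨x, hx, hAx⟩ r c _ => cycleWeight_le_one_of_maxMul_le hx hAx c, fun hcyc => ?_⟩
  have hclosed := walkWeight_le_one_of_cycleWeight_le_one hcyc
  refine ⟨fun i => sSup (walkWeightsTo A i), fun i => ?_, fun i => ?_⟩
  · exact one_pos.trans_le (le_csSup (bddAbove_walkWeightsTo hclosed i) (one_mem_walkWeightsTo i))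
  · exact Finset.sup_le fun j _ => mul_sSup_walkWeightsTo_le hclosed i j

end
end

section
/- Let $A$ be a $d\times d$ nonnegative matrix over the max-times semiring with maximum cycle mean $\lambda(A)=1$. Let $S\subseteq\{1,\dots,d\}$ be the union of the supports of all critical cycles (cycles whose geometric mean of weights equals $1$). If $x$ has all entries strictly positive and $A\odot x\le x$ entrywise, then $A_{SS}\odot x_S = x_S$, where $A_{SS}$ and $x_S$ denote the restrictions to indices in $S$. -/
/-!
Along a critical cycle `c`, subinvariance gives `A (c (t+1)) (c t) * x (c t) ≤ x (c (t+1))` for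
every edge. The product of the left sides is `cycleWeight A c * ∏ x (c t) = ∏ x (c t)`, which is
also the product of the right sides after a cyclic shift; since `x > 0`, every edge inequality is
an equality. So for `i = c t` the predecessor `j = c (t-1)`, itself in `S`, attains
`A i j * x j = x i`, while `A ⊙ x ≤ x` bounds all the other terms by `x i`.
-/

open scoped NNReal

noncomputable section

namespace Finset

theorem prod_eq_prod_iff_of_le_of_pos {ι R : Type*} [CommMonoidWithZero R] [PartialOrder R]
    [ZeroLEOneClass R] [PosMulStrictMono R] [Nontrivial R] {s : Finset ι} {f g : ι → R}
    (hf : ∀ i ∈ s, 0 ≤ f i) (hfg : ∀ i ∈ s, f i ≤ g i) (hg : ∀ i ∈ s, 0 < g i) :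
    ∏ i ∈ s, f i = ∏ i ∈ s, g i ↔ ∀ i ∈ s, f i = g i := by
  refine ⟨fun h => ?_, prod_congr rfl⟩
  by_contra! hne
  obtain ⟨i, hi, hfgi⟩ := hne
  have hf_pos : ∀ j ∈ s, 0 < f j := fun j hj =>
    (hf j hj).lt_of_ne' fun hfj => (prod_pos hg).ne' (h ▸ prod_eq_zero hj hfj)
  exact (prod_lt_prod hf_pos hfg ⟨i, hi, (hfg i hi).lt_of_ne hfgi⟩).ne h

end Finset

section MaxTimes

variable {d : ℕ} (A : Matrix (Fin d) (Fin d) ℝ≥0) (x : Fin d → ℝ≥0)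

theorem mul_le_maxMul (i j : Fin d) : A i j * x j ≤ maxMul A x i :=
  Finset.le_sup (f := fun j => A i j * x j) (Finset.mem_univ j)

variable {A x}

theorem mul_eq_of_cycleWeight_eq_one {r : ℕ} {c : Fin (r + 1) → Fin d}
    (hc : cycleWeight A c = 1) (hx : ∀ i, 0 < x i) (hsub : ∀ i, maxMul A x i ≤ x i)
    (t : Fin (r + 1)) : A (c (t + 1)) (c t) * x (c t) = x (c (t + 1)) := by
  have hshift : ∏ t, x (c (t + 1)) = ∏ t, x (c t) :=
    Equiv.prod_comp (Equiv.addRight 1) (x ∘ c)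
  have hprod : ∏ t, A (c (t + 1)) (c t) * x (c t) = ∏ t, x (c (t + 1)) := by
    rw [Finset.prod_mul_distrib, hshift, ← cycleWeight, hc, one_mul]
  exact (Finset.prod_eq_prod_iff_of_le_of_pos (fun _ _ => zero_le)
    (fun t _ => (mul_le_maxMul A x _ _).trans (hsub _)) (fun _ _ => hx _)).1 hprod t
    (Finset.mem_univ t)

end MaxTimes

theorem stmt2_general {d : ℕ} (A : Matrix (Fin d) (Fin d) ℝ≥0)
    (S : Set (Fin d))
    (hS : S = {i | ∃ (r : ℕ) (c : Fin (r + 1) → Fin d),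
      Function.Injective c ∧ cycleWeight A c = 1 ∧ ∃ t, c t = i})
    (x : Fin d → ℝ≥0) (hx : ∀ i, 0 < x i)
    (hsub : ∀ i, maxMul A x i ≤ x i) :
    ∀ i ∈ S, sSup ((fun j => A i j * x j) '' S) = x i := by
  intro i hi
  obtain ⟨r, c, hinj, hc, t, rfl⟩ := hS ▸ hi
  have hpred_mem : c (t - 1) ∈ S := hS ▸ ⟨r, c, hinj, hc, t - 1, rfl⟩
  have hpred_tight : A (c t) (c (t - 1)) * x (c (t - 1)) = x (c t) := by
    simpa using mul_eq_of_cycleWeight_eq_one hc hx hsub (t - 1)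
  refine IsGreatest.csSup_eq ⟨⟨c (t - 1), hpred_mem, hpred_tight⟩, ?_⟩
  rintro _ ⟨j, -, rfl⟩
  exact (mul_le_maxMul A x _ j).trans (hsub _)

/-- If `λ(A) = 1`, `S` is the union of the supports of the critical cycles
(cycles of weight `1`), and `x > 0` satisfies `A ⊙ x ≤ x`, then `A_{SS} ⊙ x_S = x_S`. -/
theorem stmt2 {d : ℕ} (A : Matrix (Fin d) (Fin d) ℝ≥0)
    (hA : maxCycleMean A = 1)
    (S : Set (Fin d))
    (hS : S = {i | ∃ (r : ℕ) (c : Fin (r + 1) → Fin d),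
      Function.Injective c ∧ cycleWeight A c = 1 ∧ ∃ t, c t = i})
    (x : Fin d → ℝ≥0) (hx : ∀ i, 0 < x i)
    (hsub : ∀ i, maxMul A x i ≤ x i) :
    ∀ i ∈ S, sSup ((fun j => A i j * x j) '' S) = x i :=
  stmt2_general A S hS x hx hsub

end
end

section
/- (Diamond) Consider the DAG on $\{1,2,3,4\}$ with edges $1\to2, 1\to3, 2\to4, 3\to4$ and positive coefficients $c_{21},c_{31},c_{42},c_{43}$ satisfying $c_{42}c_{21}\ge c_{43}c_{31}$. Let $X_1=Z_1$, $X_2=c_{21}X_1\vee Z_2$, $X_3=c_{31}X_1\vee Z_3$, $X_4=c_{42}X_2\vee c_{43}X_3\vee Z_4$, with $Z_1,Z_2,Z_3,Z_4$ independent positive random variables. Then $X_4 = c_{42}X_2\vee c_{43}Z_3\vee Z_4$, and consequently $X_1$ and $X_4$ are conditionally independent given $X_2$. -/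
/-!
Since `c₄₃ c₃₁ Z₁ ≤ c₄₂ c₂₁ Z₁ ≤ c₄₂ X₂`, the path `1 → 3 → 4` is dominated by `1 → 2 → 4`, so
`X₄ = c₄₂ X₂ ∨ c₄₃ Z₃ ∨ Z₄`. Thus `X₁` and `X₂` are functions of `V = (Z₁, Z₂)`, and `X₄` is a
function of `X₂` and of `W = (Z₃, Z₄)`, which is independent of `V`. Conditional independence then
follows from the general fact that if `𝓐 ⟂ 𝓑` and `𝓖 ⊆ 𝓐`, then `𝓐 ⟂ 𝓖 ∨ 𝓑` given `𝓖`: for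
`d ∈ 𝓐`, `c ∈ 𝓖`, `b ∈ 𝓑` the tower property gives `P(d ∩ c ∩ b | 𝓖) = P(b) 1_c P(d | 𝓖)`.
-/

open MeasureTheory ProbabilityTheory MeasurableSpace

section DiamondIdentity

variable {R : Type*} [CommSemiring R] [LinearOrder R] [IsOrderedRing R]

lemma sup_mul_sup_eq_of_mul_le {a c q z : R} (hc : 0 ≤ c) (hq : c * q ≤ a) :
    a ⊔ c * (q ⊔ z) = a ⊔ c * z := by
  rw [mul_max_of_nonneg _ _ hc, ← sup_assoc, sup_eq_left.mpr hq]

lemma diamond_sink_eq {c₂₁ c₃₁ c₄₂ c₄₃ z₁ z₂ z₃ z₄ : R} (hz₁ : 0 ≤ z₁) (h₄₂ : 0 ≤ c₄₂)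
    (h₄₃ : 0 ≤ c₄₃) (hcrit : c₄₃ * c₃₁ ≤ c₄₂ * c₂₁) :
    c₄₂ * (c₂₁ * z₁ ⊔ z₂) ⊔ c₄₃ * (c₃₁ * z₁ ⊔ z₃) ⊔ z₄
      = c₄₂ * (c₂₁ * z₁ ⊔ z₂) ⊔ c₄₃ * z₃ ⊔ z₄ := by
  congr 1
  refine sup_mul_sup_eq_of_mul_le h₄₃ ?_
  calc c₄₃ * (c₃₁ * z₁) = c₄₃ * c₃₁ * z₁ := (mul_assoc _ _ _).symm
    _ ≤ c₄₂ * c₂₁ * z₁ := mul_le_mul_of_nonneg_right hcrit hz₁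
    _ = c₄₂ * (c₂₁ * z₁) := mul_assoc _ _ _
    _ ≤ c₄₂ * (c₂₁ * z₁ ⊔ z₂) := mul_le_mul_of_nonneg_left le_sup_left h₄₂

end DiamondIdentity

namespace ProbabilityTheory

variable {Ω : Type*} {m' mA mB mΩ : MeasurableSpace Ω} {μ : Measure Ω} [IsFiniteMeasure μ]
  {b d : Set Ω}

lemma condExp_indicator_inter_of_indep (hA : mA ≤ mΩ) (hB : mB ≤ mΩ) (hind : Indep mA mB μ)
    (hd : MeasurableSet[mA] d) (hb : MeasurableSet[mB] b) :
    μ⟦d ∩ b | mA⟧ =ᵐ[μ] μ.real b • μ⟦d | mA⟧ := by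
  have hbA : μ⟦b | mA⟧ =ᵐ[μ] fun _ ↦ μ.real b :=
    (condExp_indep_eq hB hA (stronglyMeasurable_const.indicator hb) hind.symm).trans
      (by simp [integral_indicator (hB _ hb)])
  have hdA : μ⟦d | mA⟧ = d.indicator fun _ ↦ 1 :=
    condExp_of_stronglyMeasurable hA (stronglyMeasurable_const.indicator hd)
      ((integrable_const _).indicator (hA _ hd))
  rw [← Set.indicator_indicator, hdA]
  filter_upwards [condExp_indicator ((integrable_const (1 : ℝ)).indicator (hB _ hb)) hd, hbA]
    with ω h h'
  by_cases hω : ω ∈ d <;> simp [h, h', hω]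

lemma condExp_indicator_inter_of_indep_of_le (hA : mA ≤ mΩ) (hB : mB ≤ mΩ) (h'A : m' ≤ mA)
    (hind : Indep mA mB μ) (hd : MeasurableSet[mA] d) (hb : MeasurableSet[mB] b) :
    μ⟦d ∩ b | m'⟧ =ᵐ[μ] μ.real b • μ⟦d | m'⟧ :=
  calc μ⟦d ∩ b | m'⟧ =ᵐ[μ] μ[μ⟦d ∩ b | mA⟧ | m'] := (condExp_condExp_of_le h'A hA).symm
    _ =ᵐ[μ] μ[μ.real b • μ⟦d | mA⟧ | m'] :=
        condExp_congr_ae (condExp_indicator_inter_of_indep hA hB hind hd hb)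
    _ =ᵐ[μ] μ.real b • μ[μ⟦d | mA⟧ | m'] := condExp_smul _ _ _
    _ =ᵐ[μ] μ.real b • μ⟦d | m'⟧ := (condExp_condExp_of_le h'A hA).const_smul _

lemma isPiSystem_image2_inter_measurableSet (m₁ m₂ : MeasurableSpace Ω) :
    IsPiSystem (Set.image2 (· ∩ ·) {s | MeasurableSet[m₁] s} {s | MeasurableSet[m₂] s}) := by
  rintro - ⟨a, ha, b, hb, rfl⟩ - ⟨a', ha', b', hb', rfl⟩ -
  exact ⟨a ∩ a', ha.inter ha', b ∩ b', hb.inter hb', (Set.inter_inter_inter_comm a b a' b').symm⟩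

lemma generateFrom_image2_inter_measurableSet (m₁ m₂ : MeasurableSpace Ω) :
    generateFrom (Set.image2 (· ∩ ·) {s | MeasurableSet[m₁] s} {s | MeasurableSet[m₂] s})
      = m₁ ⊔ m₂ := by
  refine le_antisymm (generateFrom_le ?_) (sup_le (fun s hs ↦ ?_) (fun s hs ↦ ?_))
  · rintro - ⟨a, ha, b, hb, rfl⟩
    exact (le_sup_left (b := m₂) _ ha).inter (le_sup_right (a := m₁) _ hb)
  · exact measurableSet_generateFrom ⟨s, hs, Set.univ, MeasurableSet.univ, Set.inter_univ s⟩
  · exact measurableSet_generateFrom ⟨Set.univ, MeasurableSet.univ, s, hs, Set.univ_inter s⟩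

variable [StandardBorelSpace Ω]

lemma Indep.condIndep_sup_right (hA : mA ≤ mΩ) (hB : mB ≤ mΩ) (h'A : m' ≤ mA)
    (hind : Indep mA mB μ) :
    CondIndep m' mA (m' ⊔ mB) (h'A.trans hA) μ := by
  have hm' : m' ≤ mΩ := h'A.trans hA
  refine CondIndepSets.condIndep hA (sup_le hm' hB) (@isPiSystem_measurableSet Ω mA)
    (isPiSystem_image2_inter_measurableSet m' mB) (@generateFrom_measurableSet Ω mA).symm
    (generateFrom_image2_inter_measurableSet m' mB).symm ?_
  refine (condIndepSets_iff m' hm' _ _ (fun s hs ↦ hA _ hs) ?_ μ).mpr ?_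
  · rintro - ⟨c, hc, b, hb, rfl⟩
    exact (hm' _ hc).inter (hB _ hb)
  rintro d - (hd : MeasurableSet[mA] d) ⟨c, hc, b, hb, rfl⟩
  have hcA : MeasurableSet[mA] c := h'A _ hc
  have hc_id : μ⟦c | m'⟧ = c.indicator fun _ ↦ 1 :=
    condExp_of_stronglyMeasurable hm' (stronglyMeasurable_const.indicator hc)
      ((integrable_const _).indicator (hm' _ hc))
  have hdc : μ⟦d ∩ c | m'⟧ =ᵐ[μ] c.indicator (μ⟦d | m'⟧) := by
    rw [Set.inter_comm, ← Set.indicator_indicator]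
    exact condExp_indicator ((integrable_const _).indicator (hA _ hd)) hc
  have hcb := condExp_indicator_inter_of_indep_of_le hA hB h'A hind hcA hb
  rw [hc_id] at hcb
  filter_upwards [condExp_indicator_inter_of_indep_of_le hA hB h'A hind (hd.inter hcA) hb,
    hdc, hcb] with ω h₁ h₂ h₃
  rw [← Set.inter_assoc, h₁, Pi.mul_apply, h₃, Pi.smul_apply, h₂]
  by_cases hω : ω ∈ c <;> simp [hω, mul_comm]

variable {α β γ δ ε : Type*} [MeasurableSpace α] [MeasurableSpace β] [MeasurableSpace γ]
  [MeasurableSpace δ] [MeasurableSpace ε]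

lemma IndepFun.condIndepFun_comp {V : Ω → α} {W : Ω → β} (hV : Measurable V) (hW : Measurable W)
    (hVW : IndepFun V W μ) {f : α → γ} {g : α → δ} {h : γ × β → ε} (hf : Measurable f)
    (hg : Measurable g) (hh : Measurable h) :
    CondIndepFun (MeasurableSpace.comap (f ∘ V) inferInstance) (hf.comp hV).comap_le
      (g ∘ V) (fun ω ↦ h (f (V ω), W ω)) μ := by
  have hfV : MeasurableSpace.comap (f ∘ V) inferInstance ≤ MeasurableSpace.comap V inferInstance :=
    (hf.comp (comap_measurable V)).comap_le
  have hCI := Indep.condIndep_sup_right hV.comap_le hW.comap_le hfV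
    ((IndepFun_iff_Indep V W μ).mp hVW)
  refine (condIndepFun_iff_condIndep _ _ _ _ _).mpr
    (condIndep_of_condIndep_of_le_right (condIndep_of_condIndep_of_le_left hCI
      (hg.comp (comap_measurable V)).comap_le) ?_)
  refine Measurable.comap_le (hh.comp (Measurable.prodMk ?_ ?_))
  · exact (comap_measurable (f ∘ V)).mono le_sup_left le_rfl
  · exact (comap_measurable W).mono le_sup_right le_rfl

end ProbabilityTheory

theorem stmt18_general {Ω : Type*} {mΩ : MeasurableSpace Ω} [StandardBorelSpace Ω]
    (μ : Measure Ω) [IsProbabilityMeasure μ]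
    (Z : Fin 4 → Ω → ℝ) (hmeas : ∀ i, Measurable (Z i))
    (hindep : iIndepFun Z μ)
    (hpos : ∀ i ω, 0 < Z i ω)
    (c21 c31 c42 c43 : ℝ)
    (h42 : 0 < c42) (h43 : 0 < c43)
    (hcrit : c43 * c31 ≤ c42 * c21)
    (X1 X2 X3 X4 : Ω → ℝ)
    (hX1 : X1 = fun ω => Z 0 ω)
    (hX2 : X2 = fun ω => c21 * X1 ω ⊔ Z 1 ω)
    (hX3 : X3 = fun ω => c31 * X1 ω ⊔ Z 2 ω)
    (hX4 : X4 = fun ω => c42 * X2 ω ⊔ c43 * X3 ω ⊔ Z 3 ω)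
    (hm : MeasurableSpace.comap X2 inferInstance ≤ mΩ) :
    (∀ ω, X4 ω = c42 * X2 ω ⊔ c43 * Z 2 ω ⊔ Z 3 ω) ∧
    CondIndepFun (MeasurableSpace.comap X2 inferInstance) hm X1 X4 μ := by
  subst hX1 hX2 hX3 hX4
  have hsink (ω : Ω) := diamond_sink_eq (z₂ := Z 1 ω) (z₃ := Z 2 ω) (z₄ := Z 3 ω)
    (hpos 0 ω).le h42.le h43.le hcrit
  refine ⟨hsink, ?_⟩
  have hVW : IndepFun (fun ω ↦ (Z 0 ω, Z 1 ω)) (fun ω ↦ (Z 2 ω, Z 3 ω)) μ :=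
    hindep.indepFun_prodMk_prodMk hmeas 0 1 2 3 (by decide) (by decide) (by decide) (by decide)
  rw [funext hsink]
  exact hVW.condIndepFun_comp ((hmeas 0).prodMk (hmeas 1)) ((hmeas 2).prodMk (hmeas 3))
    (f := fun p ↦ c21 * p.1 ⊔ p.2) (h := fun q ↦ c42 * q.1 ⊔ c43 * q.2.1 ⊔ q.2.2)
    (by fun_prop) measurable_fst (by fun_prop)

/-- Diamond: on the DAG `1 → 2, 1 → 3, 2 → 4, 3 → 4` with positive coefficients satisfying
`c_{42} c_{21} ≥ c_{43} c_{31}`, one has `X_4 = c_{42} X_2 ∨ c_{43} Z_3 ∨ Z_4`, and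
consequently `X_1` and `X_4` are conditionally independent given `X_2`. -/
theorem stmt18 {Ω : Type*} {mΩ : MeasurableSpace Ω} [StandardBorelSpace Ω] [Nonempty Ω]
    (μ : Measure Ω) [IsProbabilityMeasure μ]
    (Z : Fin 4 → Ω → ℝ) (hmeas : ∀ i, Measurable (Z i))
    (hindep : iIndepFun Z μ)
    (hpos : ∀ i ω, 0 < Z i ω)
    (c21 c31 c42 c43 : ℝ)
    (h21 : 0 < c21) (h31 : 0 < c31) (h42 : 0 < c42) (h43 : 0 < c43)
    (hcrit : c43 * c31 ≤ c42 * c21)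
    (X1 X2 X3 X4 : Ω → ℝ)
    (hX1 : X1 = fun ω => Z 0 ω)
    (hX2 : X2 = fun ω => c21 * X1 ω ⊔ Z 1 ω)
    (hX3 : X3 = fun ω => c31 * X1 ω ⊔ Z 2 ω)
    (hX4 : X4 = fun ω => c42 * X2 ω ⊔ c43 * X3 ω ⊔ Z 3 ω)
    (hm : MeasurableSpace.comap X2 inferInstance ≤ mΩ) :
    (∀ ω, X4 ω = c42 * X2 ω ⊔ c43 * Z 2 ω ⊔ Z 3 ω) ∧
    CondIndepFun (MeasurableSpace.comap X2 inferInstance) hm X1 X4 μ :=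
  stmt18_general μ Z hmeas hindep hpos c21 c31 c42 c43 h42 h43 hcrit X1 X2 X3 X4 hX1 hX2 hX3 hX4 hm
end
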